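/- Let R be a commutative domain and ι : R → Λ an injective ring homomorphism whose image lies in the center of Λ. Let M be a finitely generated torsion Λ-module which is completely faithful, and let M(R) = {m ∈ M : ι(r)m = 0 for some nonzero r ∈ R} be its R-torsion submodule (a Λ-submodule of M, by centrality of the image of ι). Then M(R) is a pseudo-null Λ-module. -/

import Mathlib

/-!
Since `Λ` is Noetherian, `M(R)` is finitely generated, so the product of nonzero elements of `R`
killing a finite set of generators is a single nonzero `r` with `ι r • M(R) = 0`; centrality
of `ι r` is what lets it kill the whole span. Through the identity map `M(R)` is pseudo-related
to a subquotient of `M`, so if it were not pseudo-null, complete faithfulness would force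
`ι r = 0`, contradicting injectivity of `ι`.
-/

open CategoryTheory

/-- A module is torsion if every element is annihilated by a nonzero ring element. -/
def IsTorsionMod (Λ : Type) [Ring Λ] (M : Type) [AddCommGroup M] [Module Λ M] : Prop :=
  ∀ m : M, ∃ l : Λ, l ≠ 0 ∧ l • m = 0

/-- A finitely generated torsion `Λ`-module is pseudo-null if `Ext¹_Λ(M, Λ) = 0`. -/
def IsPseudoNull (Λ : Type) [Ring Λ] (M : Type) [AddCommGroup M] [Module Λ M] : Prop :=
  Module.Finite Λ M ∧ IsTorsionMod Λ M ∧
    Subsingleton (((Ext ℤ (ModuleCat Λ) 1).obj (Opposite.op (ModuleCat.of Λ M))).obj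
      (ModuleCat.of Λ Λ))

/-- `N` is pseudo-related to a subquotient of `M`: there are submodules `A ≤ B` of `M`,
a submodule `N₁ ≤ N` with `N/N₁` pseudo-null, a pseudo-null submodule `C` of `B/A`, and a
`Λ`-homomorphism `N₁ → (B/A)/C` with pseudo-null kernel and cokernel. -/
def PseudoRelated (Λ : Type) [Ring Λ] (N M : Type) [AddCommGroup N] [Module Λ N]
    [AddCommGroup M] [Module Λ M] : Prop :=
  ∃ (A B : Submodule Λ M), A ≤ B ∧
    ∃ (N₁ : Submodule Λ N) (C : Submodule Λ (↥B ⧸ A.comap B.subtype))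
      (f : N₁ →ₗ[Λ] ((↥B ⧸ A.comap B.subtype) ⧸ C)),
      IsPseudoNull Λ (N ⧸ N₁) ∧ IsPseudoNull Λ C ∧
      IsPseudoNull Λ (LinearMap.ker f) ∧
      IsPseudoNull Λ ((((↥B ⧸ A.comap B.subtype) ⧸ C)) ⧸ LinearMap.range f)

/-- A finitely generated torsion `Λ`-module `M` is completely faithful if every finitely
generated torsion `Λ`-module `N` which is not pseudo-null and is pseudo-related to a
subquotient of `M` has trivial global annihilator ideal. -/
def CompletelyFaithful (Λ : Type) [Ring Λ] (M : Type) [AddCommGroup M] [Module Λ M] : Prop :=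
  ∀ (N : Type) [AddCommGroup N] [Module Λ N],
    Module.Finite Λ N → IsTorsionMod Λ N → ¬ IsPseudoNull Λ N → PseudoRelated Λ N M →
      ∀ l : Λ, (∀ n : N, l • n = 0) → l = 0

/-- The `R`-torsion submodule `M(R) = {m ∈ M : ι(r) • m = 0 for some nonzero r ∈ R}`, where
`ι : R → Λ` is a ring homomorphism from a commutative domain `R` with central image. -/
def rTorsionSub (R : Type) [CommRing R] [IsDomain R] (Λ : Type) [Ring Λ] (ι : R →+* Λ)
    (hcen : ∀ (r : R) (x : Λ), ι r * x = x * ι r)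
    (M : Type) [AddCommGroup M] [Module Λ M] : Submodule Λ M where
  carrier := {m | ∃ r : R, r ≠ 0 ∧ ι r • m = 0}
  zero_mem' := ⟨1, one_ne_zero, smul_zero _⟩
  add_mem' := by
    rintro a b ⟨r, hr, ha⟩ ⟨s, hs, hb⟩
    refine ⟨r * s, mul_ne_zero hr hs, ?_⟩
    have h1 : ι (r * s) • a = 0 := by
      rw [mul_comm, map_mul, mul_smul, ha, smul_zero]
    have h2 : ι (r * s) • b = 0 := by
      rw [map_mul, mul_smul, hb, smul_zero]
    rw [smul_add, h1, h2, add_zero]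
  smul_mem' := by
    rintro c m ⟨r, hr, hm⟩
    refine ⟨r, hr, ?_⟩
    rw [smul_smul, hcen r c, mul_smul, hm, smul_zero]

theorem mem_rTorsionSub {R : Type} [CommRing R] [IsDomain R] {Λ : Type} [Ring Λ] {ι : R →+* Λ}
    {hcen : ∀ (r : R) (x : Λ), ι r * x = x * ι r} {M : Type} [AddCommGroup M] [Module Λ M]
    (m : M) : m ∈ rTorsionSub R Λ ι hcen M ↔ ∃ r : R, r ≠ 0 ∧ ι r • m = 0 := Iff.rfl

open Submodule

lemma isPseudoNull_of_subsingleton (Λ : Type) [Ring Λ] [Nontrivial Λ] (M : Type)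
    [AddCommGroup M] [Module Λ M] [Subsingleton M] : IsPseudoNull Λ M := by
  have hzero : Limits.IsZero (ModuleCat.of Λ M) := ModuleCat.isZero_of_subsingleton _
  have : Projective (ModuleCat.of Λ M) := hzero.projective
  exact ⟨Module.Finite.of_surjective (0 : Λ →ₗ[Λ] M) fun _ => ⟨0, Subsingleton.elim _ _⟩,
    fun _ => ⟨1, one_ne_zero, Subsingleton.elim _ _⟩,
    ModuleCat.subsingleton_of_isZero (isZero_Ext_succ_of_projective (R := ℤ) _ _ 0)⟩

lemma IsTorsionMod.submodule {Λ M : Type} [Ring Λ] [AddCommGroup M] [Module Λ M]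
    (h : IsTorsionMod Λ M) (T : Submodule Λ M) : IsTorsionMod Λ T := fun m =>
  (h m).imp fun _ ⟨hl, hlm⟩ => ⟨hl, Subtype.ext hlm⟩

lemma pseudoRelated_submodule (Λ : Type) [Ring Λ] [Nontrivial Λ] {M : Type} [AddCommGroup M]
    [Module Λ M] (T : Submodule Λ M) : PseudoRelated Λ T M := by
  let f := (⊥ : Submodule Λ (T ⧸ (⊥ : Submodule Λ M).comap T.subtype)).mkQ ∘ₗ
    ((⊥ : Submodule Λ M).comap T.subtype).mkQ ∘ₗ (⊤ : Submodule Λ T).subtype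
  have hinj : Function.Injective f := by
    have hQ : Function.Injective ((⊥ : Submodule Λ M).comap T.subtype).mkQ := by
      rw [← LinearMap.ker_eq_bot, ker_mkQ, comap_bot, ker_subtype]
    exact (LinearMap.ker_eq_bot.mp (ker_mkQ _)).comp (hQ.comp (injective_subtype _))
  have hsurj : Function.Surjective f :=
    (mkQ_surjective _).comp ((mkQ_surjective _).comp fun x => ⟨⟨x, trivial⟩, rfl⟩)
  have : Subsingleton (LinearMap.ker f) := by
    rw [LinearMap.ker_eq_bot.mpr hinj]; infer_instance
  have : Subsingleton (_ ⧸ LinearMap.range f) := by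
    rw [LinearMap.range_eq_top.mpr hsurj]; exact Submodule.Quotient.subsingleton_iff.mpr rfl
  have : Subsingleton (T ⧸ (⊤ : Submodule Λ T)) := Submodule.Quotient.subsingleton_iff.mpr rfl
  exact ⟨⊥, T, bot_le, ⊤, ⊥, f, isPseudoNull_of_subsingleton Λ _,
    isPseudoNull_of_subsingleton Λ _, isPseudoNull_of_subsingleton Λ _,
    isPseudoNull_of_subsingleton Λ _⟩

lemma smul_eq_zero_of_mem_span_of_commute {Λ M : Type} [Ring Λ] [AddCommGroup M] [Module Λ M]
    {z : Λ} (hz : ∀ x : Λ, z * x = x * z) {s : Set M} (hs : ∀ m ∈ s, z • m = 0) :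
    ∀ m ∈ span Λ s, z • m = 0 := by
  intro m hm
  induction hm using span_induction with
  | mem m hm => exact hs m hm
  | zero => exact smul_zero z
  | add a b _ _ ha hb => rw [smul_add, ha, hb, add_zero]
  | smul c m _ hm => rw [smul_smul, hz c, mul_smul, hm, smul_zero]

lemma exists_smul_eq_zero_of_finset {R Λ M : Type} [CommRing R] [IsDomain R] [Ring Λ]
    [AddCommGroup M] [Module Λ M] (ι : R →+* Λ) (s : Finset M)
    (hs : ∀ m ∈ s, ∃ r : R, r ≠ 0 ∧ ι r • m = 0) :
    ∃ r : R, r ≠ 0 ∧ ∀ m ∈ s, ι r • m = 0 := by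
  classical
  induction s using Finset.induction_on with
  | empty => exact ⟨1, one_ne_zero, by simp⟩
  | insert a s _ ih =>
    obtain ⟨r, hr, hra⟩ := hs a (Finset.mem_insert_self a s)
    obtain ⟨t, ht, hts⟩ := ih fun m hm => hs m (Finset.mem_insert_of_mem hm)
    refine ⟨r * t, mul_ne_zero hr ht, (Finset.forall_mem_insert _ _ _).mpr ⟨?_, fun m hm => ?_⟩⟩
    · rw [mul_comm, map_mul, mul_smul, hra, smul_zero]
    · rw [map_mul, mul_smul, hts m hm, smul_zero]

lemma exists_smul_eq_zero_of_fg_le_rTorsionSub {R Λ M : Type} [CommRing R] [IsDomain R] [Ring Λ]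
    {ι : R →+* Λ} {hcen : ∀ (r : R) (x : Λ), ι r * x = x * ι r} [AddCommGroup M] [Module Λ M]
    {T : Submodule Λ M} (hfg : T.FG) (hT : T ≤ rTorsionSub R Λ ι hcen M) :
    ∃ r : R, r ≠ 0 ∧ ∀ m ∈ T, ι r • m = 0 := by
  obtain ⟨s, rfl⟩ := hfg
  obtain ⟨r, hr, hrs⟩ := exists_smul_eq_zero_of_finset ι s fun m hm => hT (subset_span hm)
  exact ⟨r, hr, smul_eq_zero_of_mem_span_of_commute (hcen r) hrs⟩

theorem isPseudoNull_rTorsion_of_completelyFaithful_general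
    (Λ : Type) [Ring Λ] [IsNoetherianRing Λ]
    (R : Type) [CommRing R] [IsDomain R] (ι : R →+* Λ) (hinj : Function.Injective ι)
    (hcen : ∀ (r : R) (x : Λ), ι r * x = x * ι r)
    (M : Type) [AddCommGroup M] [Module Λ M] [Module.Finite Λ M]
    (htors : IsTorsionMod Λ M) (hcf : CompletelyFaithful Λ M) :
    IsPseudoNull Λ (rTorsionSub R Λ ι hcen M) := by
  have : Nontrivial Λ := ⟨⟨ι 0, ι 1, fun h => zero_ne_one (hinj h)⟩⟩
  set T := rTorsionSub R Λ ι hcen M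
  have hfg : T.FG := IsNoetherian.noetherian T
  by_contra hnot
  obtain ⟨r, hr, hrT⟩ := exists_smul_eq_zero_of_fg_le_rTorsionSub hfg le_rfl
  have hιr : ι r = 0 := hcf T (Module.Finite.iff_fg.mpr hfg) (htors.submodule T) hnot
    (pseudoRelated_submodule Λ T) (ι r) fun n => Subtype.ext (hrT n n.2)
  exact hr (hinj (hιr.trans (map_zero ι).symm))

/-- Let `R` be a commutative domain and `ι : R → Λ` an injective ring
homomorphism with central image. If `M` is a finitely generated torsion `Λ`-module which is
completely faithful, then its `R`-torsion submodule `M(R)` is pseudo-null. -/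
theorem isPseudoNull_rTorsion_of_completelyFaithful
    (Λ : Type) [Ring Λ] [IsNoetherianRing Λ] [IsNoetherianRing Λᵐᵒᵖ] [NoZeroDivisors Λ]
    (R : Type) [CommRing R] [IsDomain R] (ι : R →+* Λ) (hinj : Function.Injective ι)
    (hcen : ∀ (r : R) (x : Λ), ι r * x = x * ι r)
    (M : Type) [AddCommGroup M] [Module Λ M] [Module.Finite Λ M]
    (htors : IsTorsionMod Λ M) (hcf : CompletelyFaithful Λ M) :
    IsPseudoNull Λ (rTorsionSub R Λ ι hcen M) :=
  isPseudoNull_rTorsion_of_completelyFaithful_general Λ R ι hinj hcen M htors hcf
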